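/- arXiv:math/0408085 — 2 statements merged into one kernel-verified Lean document; each statement's English description precedes it below -/
import Mathlib

section
/- Let f : ℂ → ℂ be a transcendental entire function. Then there exists η ∈ ℂ such that f(f(η)) = η; that is, the second iterate f∘f has a fixed point. -/
open Complex Set Metric

noncomputable section

private lemma deriv_entire {f : ℂ → ℂ} (hf : Differentiable ℂ f) :
    Differentiable ℂ (deriv f) :=
  analyticOnNhd_univ_iff_differentiable.mp
    ((analyticOnNhd_univ_iff_differentiable.mpr hf).deriv)

private lemma exists_primitive (g : ℂ → ℂ) (hg : Differentiable ℂ g) :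
    ∃ G : ℂ → ℂ, Differentiable ℂ G ∧ ∀ z, deriv G z = g z := by
  obtain ⟨p, hp⟩ : ∃ p : FormalMultilinearSeries ℂ ℂ ℂ, HasFPowerSeriesOnBall g p 0 ⊤ :=
    ⟨_, hg.hasFPowerSeriesOnBall 0 one_pos⟩
  set F : ℕ → ℂ → ℂ := fun i w => p.coeff i / (i + 1) * w ^ (i + 1) with hF
  set G : ℂ → ℂ := fun w => ∑' i, F i w with hG
  have hFd : ∀ i, Differentiable ℂ (F i) := fun i =>
    (differentiable_const _).mul (differentiable_pow _)
  have hrad : ∀ R : NNReal, Summable fun i => ‖p i‖ * (R:ℝ) ^ i := fun R =>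
    p.summable_norm_mul_pow (lt_of_lt_of_le ENNReal.coe_lt_top hp.r_le)
  -- the bound on balls
  have key : ∀ R : NNReal, 0 < (R:ℝ) → (DifferentiableOn ℂ G (ball (0:ℂ) R) ∧
      ∀ z ∈ ball (0:ℂ) R, deriv G z = g z) := by
    intro R hR
    set u : ℕ → ℝ := fun i => (‖p i‖ * (R:ℝ) ^ i) * R with hu
    have hu_sum : Summable u := (hrad R).mul_right _
    have hle : ∀ (i : ℕ) (w : ℂ), w ∈ ball (0:ℂ) R → ‖F i w‖ ≤ u i := by
      intro i w hw
      have hw' : ‖w‖ ≤ (R:ℝ) := le_of_lt (by simpa using mem_ball_zero_iff.mp hw)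
      have h1 : ‖p.coeff i / (i + 1 : ℂ)‖ ≤ ‖p i‖ := by
        rw [norm_div, p.norm_apply_eq_norm_coef]
        have hn : (1:ℝ) ≤ ‖(i + 1 : ℂ)‖ := by
          have : ((i:ℂ) + 1) = ((i + 1 : ℕ) : ℂ) := by push_cast; ring
          rw [show ((i:ℂ) + 1) = ((i + 1 : ℕ) : ℂ) by push_cast; ring, Complex.norm_natCast]
          exact_mod_cast Nat.one_le_iff_ne_zero.mpr (Nat.succ_ne_zero i)
        exact div_le_self (norm_nonneg _) hn
      calc ‖F i w‖ = ‖p.coeff i / (i + 1)‖ * ‖w‖ ^ (i + 1) := by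
            rw [hF]; simp [norm_mul, norm_pow]
        _ ≤ ‖p i‖ * ((R:ℝ) ^ i * R) := by
            rw [pow_succ]
            exact mul_le_mul h1 (by
              exact mul_le_mul (pow_le_pow_left₀ (norm_nonneg _) hw' i) hw' (norm_nonneg _)
                (pow_nonneg (le_of_lt hR) i)) (by positivity) (norm_nonneg _)
        _ = u i := by rw [hu]; ring
    have hdiff := differentiableOn_tsum_of_summable_norm hu_sum
      (fun i => (hFd i).differentiableOn) isOpen_ball hle
    refine ⟨hdiff, fun z hz => ?_⟩
    have hsum := hasSum_deriv_of_summable_norm hu_sum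
      (fun i => (hFd i).differentiableOn) isOpen_ball hle hz
    have hder : ∀ i, deriv (F i) z = p.coeff i * z ^ i := by
      intro i
      have hne : ((i:ℂ) + 1) ≠ 0 := Nat.cast_add_one_ne_zero i
      have hD : HasDerivAt (F i) (p.coeff i / (i + 1) * ((i + 1) * z ^ i)) z := by
        have := (hasDerivAt_pow (i+1) z).const_mul (p.coeff i / ((i:ℂ) + 1))
        refine this.congr_deriv ?_
        push_cast
        ring_nf
      rw [hD.deriv]
      field_simp
    rw [funext hder] at hsum
    have hg_sum : HasSum (fun i => p.coeff i * z ^ i) (g z) := by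
      have := hp.hasSum (y := z) (by simp)
      simpa [p.apply_eq_pow_smul_coeff, smul_eq_mul, mul_comm] using this
    exact hsum.unique hg_sum
  have hball : ∀ z : ℂ, ∃ R : NNReal, 0 < (R:ℝ) ∧ z ∈ ball (0:ℂ) R := by
    intro z
    refine ⟨⟨‖z‖ + 1, by positivity⟩, ?_, ?_⟩
    · change (0:ℝ) < ‖z‖ + 1; positivity
    · rw [mem_ball_zero_iff]; change ‖z‖ < ‖z‖ + 1; linarith [norm_nonneg z]
  have hGdiff : Differentiable ℂ G := by
    intro z
    obtain ⟨R, hR1, hR2⟩ := hball z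
    exact ((key R hR1).1.differentiableAt (isOpen_ball.mem_nhds hR2))
  refine ⟨G, hGdiff, fun z => ?_⟩
  obtain ⟨R, hR1, hR2⟩ := hball z
  exact (key R hR1).2 z hR2

private lemma exists_log (f : ℂ → ℂ) (hf : Differentiable ℂ f) (h0 : ∀ z, f z ≠ 0) :
    ∃ g : ℂ → ℂ, Differentiable ℂ g ∧ ∀ z, f z = Complex.exp (g z) := by
  obtain ⟨G, hGd, hG⟩ := exists_primitive (fun z => deriv f z / f z)
    ((deriv_entire hf).div hf h0)
  set h : ℂ → ℂ := fun z => f z * Complex.exp (-G z) with hh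
  have hder : ∀ z, HasDerivAt h 0 z := by
    intro z
    have h1 : HasDerivAt f (deriv f z) z := (hf z).hasDerivAt
    have h2 : HasDerivAt (fun z => Complex.exp (-G z))
        (Complex.exp (-G z) * (-(deriv f z / f z))) z := by
      have hG' : HasDerivAt (fun z => -G z) (-(deriv f z / f z)) z := by
        have := ((hGd z).hasDerivAt).neg; rw [hG z] at this; exact this
      exact (Complex.hasDerivAt_exp (-G z)).comp z hG'
    have := h1.mul h2
    refine this.congr_deriv ?_
    field_simp [h0 z]
    ring
  have hconst : ∀ z, h z = h 0 :=
    fun z => is_const_of_deriv_eq_zero (fun w => (hder w).differentiableAt)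
      (fun w => (hder w).deriv) z 0
  have hh0 : h 0 ≠ 0 := mul_ne_zero (h0 0) (Complex.exp_ne_zero _)
  refine ⟨fun z => G z + Complex.log (h 0), hGd.add_const _, fun z => ?_⟩
  have hzc : f z * Complex.exp (-G z) = h 0 := hconst z
  have hexp : Complex.exp (G z + Complex.log (h 0)) = Complex.exp (G z) * h 0 := by
    rw [Complex.exp_add, Complex.exp_log hh0]
  rw [hexp, ← hzc, mul_comm (f z) _, ← mul_assoc, ← Complex.exp_add]
  simp

private lemma dslope_entire {f : ℂ → ℂ} (hf : Differentiable ℂ f) :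
    Differentiable ℂ (dslope f 0) := by
  intro z
  rcases eq_or_ne z 0 with rfl | hz
  · obtain ⟨p, hp⟩ := hf.analyticAt 0
    exact hp.has_fpower_series_dslope_fslope.analyticAt.differentiableAt
  · exact (differentiableAt_dslope_of_ne hz).mpr (hf z)

private lemma maxmod {f : ℂ → ℂ} (hf : Differentiable ℂ f) {r M : ℝ} (hr : 0 < r)
    (hbd : ∀ z ∈ sphere (0:ℂ) r, ‖f z‖ ≤ M) :
    ∀ z ∈ closedBall (0:ℂ) r, ‖f z‖ ≤ M := by
  intro z hz
  exact Complex.norm_le_of_forall_mem_frontier_norm_le (U := ball (0:ℂ) r) isBounded_ball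
    hf.diffContOnCl (fun x hx => hbd x (by rwa [frontier_ball 0 hr.ne'] at hx))
    (by rwa [closure_ball 0 hr.ne'])

private lemma attains (H : ℂ → ℂ) (hH : Differentiable ℂ H) (h0 : H 0 = 0)
    (h1 : deriv H 0 = 1) {M : ℝ}
    (hM : ∀ w ∈ closedBall (0:ℂ) 1, ‖H w‖ ≤ M) {w : ℂ}
    (hw : ‖w‖ < 1 / (16 * (M + 1))) : ∃ z, H z = w := by
  have hM0 : 0 ≤ M := le_trans (by simp [h0]) (hM 0 (by simp))
  have hM1 : (0:ℝ) < M + 1 := by linarith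
  rcases eq_or_ne w 0 with rfl | hw0
  · exact ⟨0, h0⟩
  set G : ℂ → ℂ := fun z => H z - z with hGdef
  have hGd : Differentiable ℂ G := hH.sub differentiable_id
  have hG0 : G 0 = 0 := by simp [hGdef, h0]
  have hG'0 : deriv G 0 = 0 := by
    have hD : HasDerivAt G (deriv H 0 - 1) 0 := ((hH 0).hasDerivAt).sub (hasDerivAt_id 0)
    rw [hD.deriv, h1, sub_self]
  set G₁ : ℂ → ℂ := dslope G 0 with hG₁def
  have hG₁d : Differentiable ℂ G₁ := dslope_entire hGd
  have hG₁0 : G₁ 0 = 0 := by rw [hG₁def, dslope_same, hG'0]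
  have hGbd : ∀ z ∈ sphere (0:ℂ) 1, ‖G z‖ ≤ M + 1 := by
    intro z hz
    have hz1 : ‖z‖ = 1 := by simpa using hz
    calc ‖G z‖ ≤ ‖H z‖ + ‖z‖ := norm_sub_le _ _
      _ ≤ M + 1 := by
          rw [hz1]
          exact add_le_add_left (hM z (mem_closedBall_zero_iff.mpr hz1.le)) 1
  have hG₁bd : ∀ z ∈ closedBall (0:ℂ) 1, ‖G₁ z‖ ≤ M + 1 := by
    refine maxmod hG₁d one_pos (fun z hz => ?_)
    have hz1 : ‖z‖ = 1 := by simpa using hz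
    have e1 : z • G₁ z = G z := by simpa [hG0] using sub_smul_dslope G 0 z
    have hnorm : ‖z‖ * ‖G₁ z‖ = ‖G z‖ := by rw [← e1, norm_smul]
    rw [hz1, one_mul] at hnorm
    rw [hnorm]
    exact hGbd z hz
  set G₂ : ℂ → ℂ := dslope G₁ 0 with hG₂def
  have hG₂d : Differentiable ℂ G₂ := dslope_entire hG₁d
  have hG₂bd : ∀ z ∈ closedBall (0:ℂ) 1, ‖G₂ z‖ ≤ M + 1 := by
    refine maxmod hG₂d one_pos (fun z hz => ?_)
    have hz1 : ‖z‖ = 1 := by simpa using hz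
    have e2 : z • G₂ z = G₁ z := by simpa [hG₁0] using sub_smul_dslope G₁ 0 z
    have hnorm : ‖z‖ * ‖G₂ z‖ = ‖G₁ z‖ := by rw [← e2, norm_smul]
    rw [hz1, one_mul] at hnorm
    rw [hnorm]
    exact hG₁bd z (mem_closedBall_zero_iff.mpr hz1.le)
  have hkey : ∀ z ∈ closedBall (0:ℂ) 1, ‖G z‖ ≤ (M + 1) * ‖z‖ ^ 2 := by
    intro z hz
    have e1 : z • G₁ z = G z := by simpa [hG0] using sub_smul_dslope G 0 z
    have e2 : z • G₂ z = G₁ z := by simpa [hG₁0] using sub_smul_dslope G₁ 0 z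
    have h2 := hG₂bd z hz
    have hzn : 0 ≤ ‖z‖ := norm_nonneg z
    have hz1 : ‖z‖ ≤ 1 := mem_closedBall_zero_iff.mp hz
    have e3 : ‖G z‖ = ‖z‖ * (‖z‖ * ‖G₂ z‖) := by
      rw [← e1, ← e2, norm_smul, norm_smul]
    rw [e3]
    nlinarith [norm_nonneg (G₂ z)]
  set r : ℝ := 1 / (4 * (M + 1)) with hrdef
  have hr0 : 0 < r := by rw [hrdef]; positivity
  have hrM : (M + 1) * r = 1 / 4 := by rw [hrdef]; field_simp
  have hr1 : r ≤ 1 := by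
    rw [hrdef, div_le_one (by positivity)]
    linarith
  have hHlow : ∀ z ∈ sphere (0:ℂ) r, 3 / 4 * r ≤ ‖H z‖ := by
    intro z hz
    have hz1 : ‖z‖ = r := by simpa using hz
    have hG := hkey z (mem_closedBall_zero_iff.mpr (by rw [hz1]; exact hr1))
    rw [hz1] at hG
    have htri : ‖z‖ ≤ ‖H z‖ + ‖G z‖ := by
      calc ‖z‖ = ‖H z - G z‖ := by rw [hGdef]; simp
        _ ≤ ‖H z‖ + ‖G z‖ := norm_sub_le _ _
    rw [hz1] at htri
    have hsq : (M + 1) * r ^ 2 = 1 / 4 * r := by rw [pow_two, ← mul_assoc, hrM]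
    linarith
  by_contra hcon
  push_neg at hcon
  set q : ℂ → ℂ := fun z => (H z - w)⁻¹ with hqdef
  have hqd : Differentiable ℂ q :=
    Differentiable.inv (hH.sub_const w) (fun z => sub_ne_zero.mpr (hcon z))
  have hwr : ‖w‖ < r / 4 := by
    rw [hrdef]
    calc ‖w‖ < 1 / (16 * (M + 1)) := hw
      _ = 1 / (4 * (M + 1)) / 4 := by field_simp; ring
  have hqb : ∀ z ∈ sphere (0:ℂ) r, ‖q z‖ ≤ 2 / r := by
    intro z hz
    have hHl := hHlow z hz
    have hlow : r / 2 ≤ ‖H z - w‖ := by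
      have h1 : ‖H z‖ - ‖w‖ ≤ ‖H z - w‖ := norm_sub_norm_le _ _
      linarith
    have h2r : (0:ℝ) < r / 2 := by positivity
    calc ‖q z‖ = ‖H z - w‖⁻¹ := by rw [hqdef, norm_inv]
      _ ≤ (r / 2)⁻¹ := by
          apply inv_anti₀ h2r hlow
      _ = 2 / r := by rw [inv_div]
  have hq0 := maxmod hqd hr0 hqb 0 (mem_closedBall_self hr0.le)
  have hq0' : ‖q 0‖ = ‖w‖⁻¹ := by rw [hqdef]; simp [h0]
  rw [hq0'] at hq0
  have hwpos : 0 < ‖w‖ := norm_pos_iff.mpr hw0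
  have h' := inv_anti₀ (inv_pos.mpr hwpos) hq0
  rw [inv_inv] at h'
  have hfin : r / 2 ≤ ‖w‖ := by
    rw [show (2 / r)⁻¹ = r / 2 by rw [inv_div]] at h'
    exact h'
  linarith

private lemma norm_fderiv_eq (f : ℂ → ℂ) (x : ℂ) : ‖fderiv ℂ f x‖ = ‖deriv f x‖ := by
  rw [← toSpanSingleton_deriv, ContinuousLinearMap.norm_toSpanSingleton]

private lemma bloch (g : ℂ → ℂ) (hg : Differentiable ℂ g) (h0 : deriv g 0 ≠ 0) :
    ∃ w : ℂ, ball w (‖deriv g 0‖ / 48) ⊆ range g := by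
  have hderiv_cont : Continuous (deriv g) := (deriv_entire hg).continuous
  set K : ℂ → ℝ := fun z => (2 - ‖z‖) * ‖deriv g z‖ with hK
  have hKcont : ContinuousOn K (closedBall (0:ℂ) 2) :=
    ((continuous_const.sub continuous_norm).mul hderiv_cont.norm).continuousOn
  obtain ⟨p, hp2, hpmax⟩ := (isCompact_closedBall (0:ℂ) 2).exists_isMaxOn
    ⟨0, by simp⟩ hKcont
  set M₀ : ℝ := K p with hM₀
  have hK0 : K 0 = 2 * ‖deriv g 0‖ := by rw [hK]; simp
  have hg0pos : 0 < ‖deriv g 0‖ := norm_pos_iff.mpr h0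
  have hM₀pos : 0 < M₀ := by
    have := hpmax (by simp : (0:ℂ) ∈ closedBall 0 2)
    have h2 : K 0 > 0 := by rw [hK0]; positivity
    exact lt_of_lt_of_le h2 this
  have hp_lt : ‖p‖ < 2 := by
    rcases lt_or_ge (‖p‖) 2 with h | h
    · exact h
    · exfalso
      have hple : ‖p‖ ≤ 2 := mem_closedBall_zero_iff.mp hp2
      have hM₀' : M₀ = (2 - ‖p‖) * ‖deriv g p‖ := rfl
      have : M₀ ≤ 0 := by
        rw [hM₀']
        nlinarith [norm_nonneg (deriv g p)]
      linarith
  set ρ : ℝ := (2 - ‖p‖) / 2 with hρ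
  have hρpos : 0 < ρ := by rw [hρ]; linarith
  have hbound : ∀ ζ : ℂ, ‖ζ‖ ≤ 1 → ‖deriv g (p + ρ * ζ)‖ ≤ M₀ / ρ := by
    intro ζ hζ
    have hz2 : ‖p + ρ * ζ‖ ≤ 2 - ρ := by
      calc ‖p + ρ * ζ‖ ≤ ‖p‖ + ‖(ρ:ℂ) * ζ‖ := norm_add_le _ _
        _ ≤ ‖p‖ + ρ := by
            rw [norm_mul, Complex.norm_real, Real.norm_eq_abs]
            have : |ρ| = ρ := abs_of_pos hρpos
            nlinarith [norm_nonneg ζ]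
        _ = 2 - ρ := by rw [hρ]; ring
    have hmem : p + ρ * ζ ∈ closedBall (0:ℂ) 2 :=
      mem_closedBall_zero_iff.mpr (by linarith)
    have hKle := hpmax hmem
    have h2z : ρ ≤ 2 - ‖p + ρ * ζ‖ := by linarith
    have : (2 - ‖p + ρ * ζ‖) * ‖deriv g (p + ρ * ζ)‖ ≤ M₀ := hKle
    rw [le_div_iff₀ hρpos]
    nlinarith [norm_nonneg (deriv g (p + ρ * ζ))]
  set h : ℂ → ℂ := fun ζ => g (p + ρ * ζ) - g p with hh
  have hinner : ∀ ζ : ℂ, HasDerivAt (fun ζ : ℂ => p + (ρ:ℂ) * ζ) (ρ:ℂ) ζ := by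
    intro ζ
    simpa using ((hasDerivAt_id ζ).const_mul (ρ:ℂ)).const_add p
  have hhd : ∀ ζ : ℂ, HasDerivAt h ((ρ:ℂ) * deriv g (p + ρ * ζ)) ζ := by
    intro ζ
    have hcomp := ((hg (p + ρ * ζ)).hasDerivAt.comp ζ (hinner ζ)).sub_const (g p)
    rw [mul_comm]
    exact hcomp
  have hdiff : Differentiable ℂ h := fun ζ => (hhd ζ).differentiableAt
  have hh0 : h 0 = 0 := by rw [hh]; simp
  have hd0 : deriv h 0 = (ρ:ℂ) * deriv g p := by simpa using (hhd 0).deriv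
  have hKp : M₀ = 2 * ρ * ‖deriv g p‖ := by
    have hM₀' : M₀ = (2 - ‖p‖) * ‖deriv g p‖ := rfl
    rw [hM₀', hρ]; ring
  have hnd0 : ‖deriv h 0‖ = M₀ / 2 := by
    rw [hd0, norm_mul, Complex.norm_real, Real.norm_eq_abs, abs_of_pos hρpos, hKp]; ring
  have hd0ne : deriv h 0 ≠ 0 := by
    intro hcon
    rw [hcon, norm_zero] at hnd0
    linarith
  have hmean : ∀ ζ ∈ closedBall (0:ℂ) 1, ‖h ζ‖ ≤ M₀ := by
    intro ζ hζ
    have := (convex_closedBall (0:ℂ) 1).norm_image_sub_le_of_norm_fderiv_le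
      (f := h) (C := M₀)
      (fun x _ => (hdiff x))
      (fun x hx => by
        rw [norm_fderiv_eq, (hhd x).deriv, norm_mul, Complex.norm_real, Real.norm_eq_abs, abs_of_pos hρpos]
        have := hbound x (mem_closedBall_zero_iff.mp hx)
        calc ρ * ‖deriv g (p + ρ * x)‖ ≤ ρ * (M₀ / ρ) := by
              exact mul_le_mul_of_nonneg_left this hρpos.le
          _ = M₀ := by field_simp)
      (mem_closedBall_self one_pos.le) hζ
    calc ‖h ζ‖ = ‖h ζ - h 0‖ := by rw [hh0, sub_zero]
      _ ≤ M₀ * ‖ζ - 0‖ := this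
      _ ≤ M₀ := by
          rw [sub_zero]
          nlinarith [mem_closedBall_zero_iff.mp hζ, norm_nonneg ζ]
  set d : ℂ := deriv h 0 with hd
  set Hf : ℂ → ℂ := fun ζ => h ζ / d with hHf
  have hHfd : Differentiable ℂ Hf := hdiff.div_const d
  have hHf0 : Hf 0 = 0 := by rw [hHf]; simp [hh0]
  have hHf1 : deriv Hf 0 = 1 := by
    rw [hHf, deriv_div_const, ← hd, div_self hd0ne]
  have hHfb : ∀ ζ ∈ closedBall (0:ℂ) 1, ‖Hf ζ‖ ≤ 2 := by
    intro ζ hζ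
    rw [hHf]
    simp only [norm_div]
    rw [hnd0, div_le_iff₀ (by linarith)]
    calc ‖h ζ‖ ≤ M₀ := hmean ζ hζ
      _ = 2 * (M₀ / 2) := by ring
  refine ⟨g p, fun v hv => ?_⟩
  rw [mem_ball] at hv
  have hvd : ‖(v - g p) / d‖ < 1 / (16 * (2 + 1)) := by
    rw [norm_div, hnd0, div_lt_iff₀ (by linarith)]
    have hdist : ‖v - g p‖ < ‖deriv g 0‖ / 48 := by
      rw [← dist_eq_norm]; exact hv
    have hM₀big : ‖deriv g 0‖ ≤ M₀ / 2 := by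
      have h1 : K 0 ≤ K p := hpmax (by simp : (0:ℂ) ∈ closedBall 0 2)
      rw [hK0] at h1
      have h2 : M₀ = K p := rfl
      linarith [h2 ▸ h1]
    calc ‖v - g p‖ < ‖deriv g 0‖ / 48 := hdist
      _ ≤ (M₀ / 2) / 48 := by linarith
      _ = 1 / (16 * (2 + 1)) * (M₀ / 2) := by ring
  obtain ⟨ζ, hζ⟩ := attains Hf hHfd hHf0 hHf1 hHfb hvd
  refine ⟨p + ρ * ζ, ?_⟩
  have : h ζ = v - g p := by
    have := hζ
    rw [hHf] at this
    field_simp at this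
    rw [this]
  have := this
  rw [hh] at this
  linear_combination this

private lemma big_disks (F : ℂ → ℂ) (hF : Differentiable ℂ F) {z₀ : ℂ}
    (h0 : deriv F z₀ ≠ 0) (R : ℝ) : ∃ w : ℂ, ball w R ⊆ range F := by
  have hnorm : 0 < ‖deriv F z₀‖ := norm_pos_iff.mpr h0
  set t : ℝ := 48 * (|R| + 1) / ‖deriv F z₀‖ with ht
  have htpos : 0 < t := by rw [ht]; positivity
  set g : ℂ → ℂ := fun ζ => F (z₀ + t * ζ) with hg
  have hinner : ∀ ζ : ℂ, HasDerivAt (fun ζ : ℂ => z₀ + (t:ℂ) * ζ) (t:ℂ) ζ := by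
    intro ζ
    simpa using ((hasDerivAt_id ζ).const_mul (t:ℂ)).const_add z₀
  have hgd : ∀ ζ : ℂ, HasDerivAt g (deriv F (z₀ + t * ζ) * t) ζ := by
    intro ζ
    exact (hF (z₀ + t * ζ)).hasDerivAt.comp ζ (hinner ζ)
  have hgdiff : Differentiable ℂ g := fun ζ => (hgd ζ).differentiableAt
  have hg0 : deriv g 0 ≠ 0 := by
    have : deriv g 0 = deriv F (z₀ + t * 0) * t := (hgd 0).deriv
    rw [this]
    simp only [mul_zero, add_zero]
    exact mul_ne_zero h0 (by exact_mod_cast htpos.ne')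
  obtain ⟨w, hw⟩ := bloch g hgdiff hg0
  refine ⟨w, fun v hv => ?_⟩
  have hnormg : ‖deriv g 0‖ / 48 = |R| + 1 := by
    have : deriv g 0 = deriv F z₀ * t := by
      have := (hgd 0).deriv
      simpa using this
    rw [this, norm_mul, Complex.norm_real, Real.norm_eq_abs, abs_of_pos htpos, ht]
    rw [show ‖deriv F z₀‖ = ‖deriv F z₀‖ from rfl] at hnorm
    field_simp
  have hsub : ball w R ⊆ ball w (‖deriv g 0‖ / 48) := by
    apply ball_subset_ball
    rw [hnormg]
    calc R ≤ |R| := le_abs_self R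
      _ ≤ |R| + 1 := by linarith
  have := hw (hsub hv)
  obtain ⟨ζ, hζ⟩ := this
  exact ⟨z₀ + t * ζ, hζ⟩

private lemma cosh_sq_step (w : ℂ) :
    Complex.cosh (w + (Real.pi / 2 : ℝ) * Complex.I) ^ 2 = 1 - Complex.cosh w ^ 2 := by
  have h1 : Complex.cosh (((Real.pi / 2 : ℝ) : ℂ) * Complex.I) = 0 := by
    rw [Complex.cosh_mul_I, ← Complex.ofReal_cos, Real.cos_pi_div_two, Complex.ofReal_zero]
  have h2 : Complex.sinh (((Real.pi / 2 : ℝ) : ℂ) * Complex.I) = Complex.I := by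
    rw [Complex.sinh_mul_I, ← Complex.ofReal_sin, Real.sin_pi_div_two, Complex.ofReal_one, one_mul]
  rw [Complex.cosh_add, h1, h2, mul_zero, zero_add]
  have h3 := Complex.cosh_sq_sub_sinh_sq w
  have h4 : Complex.I ^ 2 = -1 := Complex.I_sq
  ring_nf
  linear_combination Complex.sinh w ^ 2 * h4 + h3

private lemma cosh_sq_step' (w : ℂ) :
    Complex.cosh (w - (Real.pi / 2 : ℝ) * Complex.I) ^ 2 = 1 - Complex.cosh w ^ 2 := by
  have h1 : Complex.cosh (((Real.pi / 2 : ℝ) : ℂ) * Complex.I) = 0 := by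
    rw [Complex.cosh_mul_I, ← Complex.ofReal_cos, Real.cos_pi_div_two, Complex.ofReal_zero]
  have h2 : Complex.sinh (((Real.pi / 2 : ℝ) : ℂ) * Complex.I) = Complex.I := by
    rw [Complex.sinh_mul_I, ← Complex.ofReal_sin, Real.sin_pi_div_two, Complex.ofReal_one, one_mul]
  rw [Complex.cosh_sub, h1, h2, mul_zero, zero_sub]
  have h3 := Complex.cosh_sq_sub_sinh_sq w
  have h4 : Complex.I ^ 2 = -1 := Complex.I_sq
  ring_nf
  linear_combination Complex.sinh w ^ 2 * h4 + h3

private lemma cosh_sq_int_shift {a : ℂ} {k : ℤ} (hk : Complex.cosh a ^ 2 = (k:ℂ)) (m : ℤ) :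
    ∃ j : ℤ, Complex.cosh (a + (m:ℂ) * ((Real.pi / 2 : ℝ) * Complex.I)) ^ 2 = (j:ℂ) := by
  induction m using Int.induction_on with
  | zero => exact ⟨k, by simpa using hk⟩
  | succ n ih =>
      obtain ⟨j, hj⟩ := ih
      refine ⟨1 - j, ?_⟩
      have he : a + ((n:ℤ) + 1 : ℂ) * ((Real.pi / 2 : ℝ) * Complex.I)
          = (a + ((n:ℤ) : ℂ) * ((Real.pi / 2 : ℝ) * Complex.I)) + (Real.pi / 2 : ℝ) * Complex.I := by
        ring
      rw [show ((((n:ℤ) + 1 : ℤ)) : ℂ) = ((n:ℤ) + 1 : ℂ) by push_cast; ring, he,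
        cosh_sq_step, hj]
      push_cast
      ring
  | pred n ih =>
      obtain ⟨j, hj⟩ := ih
      refine ⟨1 - j, ?_⟩
      have he : a + ((-(n:ℤ) - 1 : ℤ) : ℂ) * ((Real.pi / 2 : ℝ) * Complex.I)
          = (a + ((-(n:ℤ) : ℤ) : ℂ) * ((Real.pi / 2 : ℝ) * Complex.I)) - (Real.pi / 2 : ℝ) * Complex.I := by
        push_cast
        ring
      rw [he, cosh_sq_step', hj]
      push_cast
      ring

private lemma grid (w : ℂ) : ∃ s : ℂ, dist s w < 2 ∧ ∃ k : ℤ, Complex.cosh s ^ 2 = (k:ℂ) := by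
  set x : ℝ := |w.re| with hxdef
  have hx0 : 0 ≤ x := abs_nonneg _
  set n : ℕ := ⌊Real.sinh x ^ 2⌋₊ with hn
  set t : ℝ := Real.arsinh (Real.sqrt n) with htdef
  have hsinh0 : 0 ≤ Real.sinh x := by
    rw [← Real.sinh_zero]
    exact Real.sinh_le_sinh.mpr hx0
  have h1 : Real.sqrt n ≤ Real.sinh x := by
    rw [show Real.sinh x = Real.sqrt (Real.sinh x ^ 2) by rw [Real.sqrt_sq hsinh0]]
    exact Real.sqrt_le_sqrt (Nat.floor_le (by positivity))
  have ht_le : t ≤ x := by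
    calc t = Real.arsinh (Real.sqrt n) := htdef
      _ ≤ Real.arsinh (Real.sinh x) := Real.arsinh_le_arsinh.mpr h1
      _ = x := Real.arsinh_sinh x
  have ht0 : 0 ≤ t := by
    rw [htdef, Real.arsinh_nonneg_iff]
    exact Real.sqrt_nonneg _
  have hcosh_t : Real.cosh t = Real.sqrt (1 + n) := by
    rw [htdef, Real.cosh_arsinh, Real.sq_sqrt (Nat.cast_nonneg n)]
  have h2 : Real.sinh x < Real.sqrt (n + 1) := by
    have h3 : Real.sinh x ^ 2 < (n:ℝ) + 1 := Nat.lt_floor_add_one _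
    rw [show Real.sinh x = Real.sqrt (Real.sinh x ^ 2) by rw [Real.sqrt_sq hsinh0]]
    exact Real.sqrt_lt_sqrt (by positivity) h3
  have hsinh1 : (1:ℝ) ≤ Real.sinh 1 := Real.self_le_sinh_iff.mpr one_pos.le
  have hx_le : x ≤ t + 1 := by
    by_contra hcc
    push_neg at hcc
    have hlt : Real.sinh (t + 1) < Real.sinh x := Real.sinh_lt_sinh.mpr hcc
    have hst : Real.sqrt (n + 1) ≤ Real.sinh (t + 1) := by
      rw [Real.sinh_add]
      have hc1 : 0 ≤ Real.sinh t := by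
        rw [← Real.sinh_zero]; exact Real.sinh_le_sinh.mpr ht0
      have hcosh1 : (1:ℝ) ≤ Real.cosh 1 := Real.one_le_cosh 1
      have hcosht : 0 < Real.cosh t := Real.cosh_pos t
      have heq : Real.sqrt ((n:ℝ) + 1) = Real.cosh t := by
        rw [hcosh_t, add_comm]
      rw [heq]
      nlinarith
    linarith
  have htx : |t - x| ≤ 1 := by
    rw [abs_le]
    constructor <;> linarith
  set m : ℤ := round (w.im / (Real.pi / 2)) with hm
  have hpi2 : (0:ℝ) < Real.pi / 2 := by positivity
  have him : |w.im - (m:ℝ) * (Real.pi / 2)| ≤ Real.pi / 4 := by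
    have hr := abs_sub_round (w.im / (Real.pi / 2))
    have heq : w.im - (m:ℝ) * (Real.pi / 2) = (w.im / (Real.pi / 2) - m) * (Real.pi / 2) := by
      field_simp
    rw [heq, abs_mul, abs_of_pos hpi2]
    calc |w.im / (Real.pi / 2) - (m:ℝ)| * (Real.pi / 2) ≤ 1 / 2 * (Real.pi / 2) := by
          exact mul_le_mul_of_nonneg_right hr hpi2.le
      _ = Real.pi / 4 := by ring
  have hpi4 : Real.pi / 4 < 0.8 := by
    have := Real.pi_lt_d2
    linarith
  have hbase : Complex.cosh ((t:ℝ) : ℂ) ^ 2 = (((n:ℤ) + 1 : ℤ) : ℂ) := by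
    rw [← Complex.ofReal_cosh, hcosh_t, ← Complex.ofReal_pow,
      Real.sq_sqrt (by positivity : (0:ℝ) ≤ 1 + n)]
    push_cast
    ring
  rcases le_or_gt 0 w.re with hre | hre
  · have hxre : x = w.re := abs_of_nonneg hre
    refine ⟨(t:ℂ) + (m:ℂ) * ((Real.pi / 2 : ℝ) * Complex.I), ?_, cosh_sq_int_shift hbase m⟩
    have hsre : ((t:ℂ) + (m:ℂ) * ((Real.pi / 2 : ℝ) * Complex.I) - w).re = t - w.re := by
      simp
    have hsim : ((t:ℂ) + (m:ℂ) * ((Real.pi / 2 : ℝ) * Complex.I) - w).im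
        = (m:ℝ) * (Real.pi / 2) - w.im := by
      simp
    rw [dist_eq_norm]
    calc ‖(t:ℂ) + (m:ℂ) * ((Real.pi / 2 : ℝ) * Complex.I) - w‖
        ≤ |((t:ℂ) + (m:ℂ) * ((Real.pi / 2 : ℝ) * Complex.I) - w).re|
          + |((t:ℂ) + (m:ℂ) * ((Real.pi / 2 : ℝ) * Complex.I) - w).im| :=
          Complex.norm_le_abs_re_add_abs_im _
      _ ≤ 1 + Real.pi / 4 := by
          rw [hsre, hsim]
          have h5 : |t - w.re| ≤ 1 := by rw [← hxre]; exact htx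
          have h6 : |(m:ℝ) * (Real.pi / 2) - w.im| ≤ Real.pi / 4 := by
            rw [abs_sub_comm]; exact him
          linarith
      _ < 2 := by linarith
  · have hxre : x = -w.re := abs_of_neg hre
    have hbase' : Complex.cosh ((-t : ℝ) + (m:ℂ) * ((Real.pi / 2 : ℝ) * Complex.I)) ^ 2
        = Complex.cosh ((t:ℝ) + ((-m : ℤ):ℂ) * ((Real.pi / 2 : ℝ) * Complex.I)) ^ 2 := by
      rw [← Complex.cosh_neg]
      congr 1
      push_cast
      ring
    obtain ⟨k, hk⟩ := cosh_sq_int_shift hbase (-m)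
    refine ⟨((-t : ℝ) : ℂ) + (m:ℂ) * ((Real.pi / 2 : ℝ) * Complex.I), ?_, ⟨k, by
      rw [hbase']; exact hk⟩⟩
    have h5 : |(-t) - w.re| ≤ 1 := by
      rw [show (-t) - w.re = -(t - x) by rw [hxre]; ring, abs_neg]
      exact htx
    rw [dist_eq_norm]
    calc ‖((-t : ℝ) : ℂ) + (m:ℂ) * ((Real.pi / 2 : ℝ) * Complex.I) - w‖
        ≤ |(((-t : ℝ) : ℂ) + (m:ℂ) * ((Real.pi / 2 : ℝ) * Complex.I) - w).re|
          + |(((-t : ℝ) : ℂ) + (m:ℂ) * ((Real.pi / 2 : ℝ) * Complex.I) - w).im| :=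
          Complex.norm_le_abs_re_add_abs_im _
      _ ≤ 1 + Real.pi / 4 := by
          have hsre : (((-t : ℝ) : ℂ) + (m:ℂ) * ((Real.pi / 2 : ℝ) * Complex.I) - w).re
              = (-t) - w.re := by simp
          have hsim : (((-t : ℝ) : ℂ) + (m:ℂ) * ((Real.pi / 2 : ℝ) * Complex.I) - w).im
              = (m:ℝ) * (Real.pi / 2) - w.im := by simp
          rw [hsre, hsim]
          have h6 : |(m:ℝ) * (Real.pi / 2) - w.im| ≤ Real.pi / 4 := by
            rw [abs_sub_comm]; exact him
          linarith
      _ < 2 := by linarith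

private lemma picard01 (f : ℂ → ℂ) (hf : Differentiable ℂ f) (h0 : ∀ z, f z ≠ 0)
    (h1 : ∀ z, f z ≠ 1) : ∀ z w, f z = f w := by
  obtain ⟨g₁, hg₁d, hg₁⟩ := exists_log f hf h0
  set c2pi : ℂ := 2 * Real.pi * Complex.I with hc2pi
  have hc2pi_ne : c2pi ≠ 0 := by
    rw [hc2pi]
    simp [Real.pi_ne_zero, Complex.I_ne_zero]
  set u : ℂ → ℂ := fun z => g₁ z / c2pi with hu
  have hud : Differentiable ℂ u := hg₁d.div_const _
  have hfu : ∀ z, f z = Complex.exp (c2pi * u z) := by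
    intro z
    rw [hu]
    simp only []
    rw [mul_comm, div_mul_cancel₀ _ hc2pi_ne]
    exact hg₁ z
  have huk : ∀ z, ∀ k : ℤ, u z ≠ (k : ℂ) := by
    intro z k hk
    apply h1 z
    rw [hfu z, hk, show c2pi * (k:ℂ) = (k:ℂ) * (2 * Real.pi * Complex.I) by
      rw [hc2pi]; ring]
    exact Complex.exp_int_mul_two_pi_mul_I k
  have hu0 : ∀ z, u z ≠ 0 := fun z h => huk z 0 (by simpa using h)
  have hu1 : ∀ z, u z ≠ 1 := fun z h => huk z 1 (by simpa using h)
  obtain ⟨l₁, hl₁d, hl₁⟩ := exists_log u hud hu0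
  obtain ⟨l₂, hl₂d, hl₂⟩ := exists_log (fun z => u z - 1) (hud.sub_const 1)
    (fun z => sub_ne_zero.mpr (hu1 z))
  set a : ℂ → ℂ := fun z => Complex.exp (l₁ z / 2) with ha
  set b : ℂ → ℂ := fun z => Complex.exp (l₂ z / 2) with hb
  have had : Differentiable ℂ a := (hl₁d.div_const 2).cexp
  have hbd : Differentiable ℂ b := (hl₂d.div_const 2).cexp
  have ha2 : ∀ z, a z ^ 2 = u z := by
    intro z
    rw [ha]
    simp only []
    rw [sq, ← Complex.exp_add, show l₁ z / 2 + l₁ z / 2 = l₁ z by ring]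
    exact (hl₁ z).symm
  have hb2 : ∀ z, b z ^ 2 = u z - 1 := by
    intro z
    rw [hb]
    simp only []
    rw [sq, ← Complex.exp_add, show l₂ z / 2 + l₂ z / 2 = l₂ z by ring]
    exact (hl₂ z).symm
  have hab_ne : ∀ z, a z - b z ≠ 0 := by
    intro z h
    have h2 : a z = b z := sub_eq_zero.mp h
    have e := hb2 z
    rw [← h2, ha2 z] at e
    have h3 : (0:ℂ) = -1 := by linear_combination e
    simp at h3
  obtain ⟨c, hcd, hc⟩ := exists_log (fun z => a z - b z) (had.sub hbd) hab_ne
  have habsum : ∀ z, a z + b z = Complex.exp (-c z) := by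
    intro z
    have hprod : (a z - b z) * (a z + b z) = 1 := by
      have h4 : a z ^ 2 - b z ^ 2 = 1 := by rw [ha2, hb2]; ring
      linear_combination h4
    have h2 : Complex.exp (c z) * (a z + b z) = 1 := by
      rw [← hc z]; exact hprod
    rw [Complex.exp_neg]
    exact eq_inv_of_mul_eq_one_right h2
  have hcosh : ∀ z, u z = Complex.cosh (c z) ^ 2 := by
    intro z
    have hcosh_def : Complex.cosh (c z) = (Complex.exp (c z) + Complex.exp (-c z)) / 2 := rfl
    have hA : a z = Complex.cosh (c z) := by
      rw [hcosh_def]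
      have e1 : a z - b z = Complex.exp (c z) := hc z
      have e2 : a z + b z = Complex.exp (-c z) := habsum z
      linear_combination e1 / 2 + e2 / 2
    rw [← ha2 z, hA]
  have hconst : ∀ z w, c z = c w := by
    by_cases hzero : ∀ z, deriv c z = 0
    · intro z w
      exact is_const_of_deriv_eq_zero hcd hzero z w
    · exfalso
      push_neg at hzero
      obtain ⟨z₁, hz₁⟩ := hzero
      obtain ⟨w0, hw0⟩ := big_disks c hcd hz₁ 2
      obtain ⟨s, hs, k, hk⟩ := grid w0
      obtain ⟨z, hz⟩ := hw0 (mem_ball.mpr hs)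
      exact huk z k (by rw [hcosh z, hz, hk])
  intro z w
  have huzw : u z = u w := by rw [hcosh z, hcosh w, hconst z w]
  rw [hfu z, hfu w, huzw]

private lemma picard2 (f : ℂ → ℂ) (hf : Differentiable ℂ f) {a b : ℂ} (hab : a ≠ b)
    (ha : ∀ z, f z ≠ a) (hb : ∀ z, f z ≠ b) : ∀ z w, f z = f w := by
  have hba : b - a ≠ 0 := sub_ne_zero.mpr (Ne.symm hab)
  set g : ℂ → ℂ := fun z => (f z - a) / (b - a) with hg
  have hgd : Differentiable ℂ g := (hf.sub_const a).div_const _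
  have hg0 : ∀ z, g z ≠ 0 := by
    intro z h
    rw [hg] at h
    simp only [div_eq_zero_iff] at h
    rcases h with h | h
    · exact ha z (by linear_combination h)
    · exact hba h
  have hg1 : ∀ z, g z ≠ 1 := by
    intro z h
    rw [hg] at h
    simp only [] at h
    rw [div_eq_one_iff_eq hba] at h
    exact hb z (by linear_combination h)
  have hconst := picard01 g hgd hg0 hg1
  intro z w
  have h2 := hconst z w
  rw [hg] at h2
  simp only [] at h2
  have h3 : f z - a = f w - a := by
    field_simp at h2
    linear_combination h2
  linear_combination h3

/-- A transcendental entire function: holomorphic on all of `ℂ` and not a polynomial. -/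
theorem second_iterate_has_fixed_point (f : ℂ → ℂ)
    (hf : Differentiable ℂ f)
    (htrans : ¬ ∃ p : Polynomial ℂ, ∀ z : ℂ, f z = p.eval z) :
    ∃ η : ℂ, f (f η) = η := by
  by_contra hno
  push_neg at hno
  have hfix : ∀ z, f z ≠ z := by
    intro z hz
    exact hno z (by rw [hz, hz])
  have hden : ∀ z, f z - z ≠ 0 := fun z => sub_ne_zero.mpr (hfix z)
  set φ : ℂ → ℂ := fun z => (f (f z) - z) / (f z - z) with hφ
  have hφd : Differentiable ℂ φ :=
    Differentiable.div ((hf.comp hf).sub differentiable_id) (hf.sub differentiable_id) hden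
  have hφ0 : ∀ z, φ z ≠ 0 := fun z =>
    div_ne_zero (sub_ne_zero.mpr (hno z)) (hden z)
  have hφ1 : ∀ z, φ z ≠ 1 := by
    intro z h
    rw [hφ] at h
    simp only [] at h
    rw [div_eq_one_iff_eq (hden z)] at h
    have : f (f z) = f z := by linear_combination h
    exact hfix (f z) this
  have hφconst := picard01 φ hφd hφ0 hφ1
  set c : ℂ := φ 0 with hcdef
  have hc0 : c ≠ 0 := hφ0 0
  have hc1 : c ≠ 1 := hφ1 0
  have heq : ∀ z, f (f z) - z = c * (f z - z) := by
    intro z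
    have h2 : φ z = c := hφconst z 0
    rw [hφ] at h2
    simp only [] at h2
    rw [div_eq_iff (hden z)] at h2
    linear_combination h2
  -- differentiate
  have hderiv : ∀ z, deriv f (f z) * deriv f z - 1 = c * (deriv f z - 1) := by
    intro z
    have hL : HasDerivAt (fun z => f (f z) - z) (deriv f (f z) * deriv f z - 1) z :=
      (((hf (f z)).hasDerivAt.comp z (hf z).hasDerivAt)).sub (hasDerivAt_id z)
    have hR : HasDerivAt (fun z => c * (f z - z)) (c * (deriv f z - 1)) z :=
      (((hf z).hasDerivAt).sub (hasDerivAt_id z)).const_mul c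
    have hfun : (fun z => f (f z) - z) = fun z => c * (f z - z) := funext heq
    rw [hfun] at hL
    exact hL.unique hR
  have h1c : (1:ℂ) - c ≠ 0 := sub_ne_zero.mpr (Ne.symm hc1)
  have hkey : ∀ z, deriv f z * (deriv f (f z) - c) = 1 - c := by
    intro z
    linear_combination hderiv z
  have hf'0 : ∀ z, deriv f z ≠ 0 := by
    intro z hz
    apply h1c
    rw [← hkey z, hz, zero_mul]
  have hffc : ∀ z, deriv f (f z) ≠ c := by
    intro z hz
    apply h1c
    rw [← hkey z, hz, sub_self, mul_zero]
  set F : ℂ → ℂ := fun z => deriv f (f z) with hF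
  have hFd : Differentiable ℂ F := (deriv_entire hf).comp hf
  have hF0 : ∀ z, F z ≠ 0 := fun z => hf'0 (f z)
  have hFc : ∀ z, F z ≠ c := fun z => hffc z
  have hFconst := picard2 F hFd (Ne.symm hc0) hF0 hFc
  set d : ℂ := F 0 with hddef
  have hdc : d - c ≠ 0 := sub_ne_zero.mpr (hFc 0)
  set e : ℂ := (1 - c) / (d - c) with hedef
  have hfe : ∀ z, deriv f z = e := by
    intro z
    have h2 : deriv f z * (d - c) = 1 - c := by
      have h3 := hkey z
      have h4 : F z = d := hFconst z 0
      rw [hF] at h4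
      simp only [] at h4
      rw [h4] at h3
      exact h3
    rw [hedef, eq_div_iff hdc]
    exact h2
  -- f is affine
  have haff : ∀ z, f z = f 0 + e * z := by
    intro z
    have hgd : ∀ w, HasDerivAt (fun z => f z - e * z) 0 w := by
      intro w
      have := ((hf w).hasDerivAt).sub ((hasDerivAt_id w).const_mul e)
      rw [hfe w] at this
      exact this.congr_deriv (by simp)
    have hconst2 : f z - e * z = f 0 - e * 0 :=
      is_const_of_deriv_eq_zero (fun w => (hgd w).differentiableAt)
        (fun w => (hgd w).deriv) z 0
    rw [mul_zero, sub_zero] at hconst2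
    linear_combination hconst2
  apply htrans
  refine ⟨Polynomial.C (f 0) + Polynomial.C e * Polynomial.X, fun z => ?_⟩
  rw [haff z]
  simp

end
end

section
/- If f : ℂ → ℂ is a transcendental entire function such that f∘f has no fixed point (equivalently, in particular f itself has no fixed point), then there exists z₀ ∈ ℂ with f(f(z₀)) = f(z₀); consequently f(z₀) is a fixed point of f. -/
open Complex Metric Set

lemma my_exists_primitive (f : ℂ → ℂ) (hf : Differentiable ℂ f) :
    ∃ F : ℂ → ℂ, ∀ z, HasDerivAt F (f z) z := by
  set a : ℕ → ℂ := fun n => (n.factorial : ℂ)⁻¹ * iteratedDeriv n f 0 with ha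
  have hsum : ∀ z : ℂ, HasSum (fun n => a n * z ^ n) (f z) := by
    intro z
    have := Complex.hasSum_taylorSeries_of_entire hf 0 z
    simpa [ha, sub_zero, smul_eq_mul, mul_comm, mul_assoc, mul_left_comm] using this
  clear_value a
  clear ha
  refine ⟨fun z => ∑' n, a n / (n + 1) * z ^ (n + 1), fun y => ?_⟩
  set R : ℝ := ‖y‖ + 1 with hR
  have hRpos : (0 : ℝ) < R := by positivity
  have hyR : y ∈ ball (0 : ℂ) R := by simp [hR]
  -- bound on coefficients from convergence at 2R
  obtain ⟨C, hC⟩ : ∃ C : ℝ, ∀ n, ‖a n * (2 * R : ℂ) ^ n‖ ≤ C := by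
    have h := (hsum (2 * R : ℂ)).summable.tendsto_atTop_zero.norm.bddAbove_range
    obtain ⟨C, hC⟩ := h
    exact ⟨C, fun n => hC ⟨n, rfl⟩⟩
  have hCnn : (0:ℝ) ≤ C := le_trans (norm_nonneg _) (hC 0)
  set u : ℕ → ℝ := fun n => C * (1/2 : ℝ) ^ n with hu
  have husum : Summable u := (summable_geometric_of_lt_one (by norm_num) (by norm_num)).mul_left C
  have key : HasDerivAt (fun z => ∑' n, a n / (n + 1) * z ^ (n + 1)) (∑' n, a n * y ^ n) y := by
    refine hasDerivAt_tsum_of_isPreconnected husum isOpen_ball (convex_ball _ _).isPreconnected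
      (g' := fun n z => a n * z ^ n) (fun n z _ => ?_) (fun n z hz => ?_) (mem_ball_self hRpos) ?_ hyR
    · have h1 : HasDerivAt (fun z : ℂ => a n / (n+1) * z ^ (n + 1))
          (a n / (n+1) * ((n + 1 : ℕ) * z ^ n)) z := (hasDerivAt_pow (n+1) z).const_mul _
      refine h1.congr_deriv ?_
      push_cast
      have hne : (n : ℂ) + 1 ≠ 0 := by norm_cast
      field_simp
    · have h2 : ‖a n * z ^ n‖ ≤ ‖a n‖ * R ^ n := by
        rw [norm_mul, norm_pow]
        gcongr
        exact le_of_lt (by simpa using hz)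
      have e : R ^ n = (2*R)^n * (1/2:ℝ)^n := by
        rw [← mul_pow]; ring_nf
      rw [hu]
      calc ‖a n * z ^ n‖ ≤ ‖a n‖ * R ^ n := h2
        _ = (‖a n‖ * (2*R)^n) * (1/2:ℝ)^n := by rw [e]; ring
        _ = ‖a n * (2*(R:ℂ))^n‖ * (1/2:ℝ)^n := by
            rw [norm_mul, norm_pow, norm_mul, Complex.norm_ofNat, Complex.norm_real,
              Real.norm_of_nonneg hRpos.le]
        _ ≤ C * (1/2:ℝ)^n := by gcongr; exact hC n
    · simpa using summable_zero
  rw [(hsum y).tsum_eq] at key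
  exact key

lemma my_deriv_entire (f : ℂ → ℂ) (hf : Differentiable ℂ f) : Differentiable ℂ (deriv f) := by
  have h1 : AnalyticOnNhd ℂ f univ := hf.differentiableOn.analyticOnNhd isOpen_univ
  have h2 : AnalyticOnNhd ℂ (deriv f) univ := h1.deriv
  intro z
  exact (h2 z (mem_univ z)).differentiableAt

lemma my_exists_log (f : ℂ → ℂ) (hf : Differentiable ℂ f) (h0 : ∀ z, f z ≠ 0) :
    ∃ g : ℂ → ℂ, Differentiable ℂ g ∧ ∀ z, Complex.exp (g z) = f z := by
  have hd : Differentiable ℂ (deriv f) := my_deriv_entire f hf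
  set h : ℂ → ℂ := fun z => deriv f z / f z with hh
  have hdh : Differentiable ℂ h := hd.div hf h0
  obtain ⟨F, hF⟩ := my_exists_primitive h hdh
  have hFd : Differentiable ℂ F := fun z => (hF z).differentiableAt
  set G : ℂ → ℂ := fun z => f z * Complex.exp (-F z) with hG
  have hGd : ∀ z, HasDerivAt G 0 z := by
    intro z
    have h1 : HasDerivAt (fun w => Complex.exp (-F w)) (Complex.exp (-F z) * (-h z)) z :=
      ((hF z).neg).cexp
    have h2 : HasDerivAt G (deriv f z * Complex.exp (-F z)
        + f z * (Complex.exp (-F z) * (-h z))) z :=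
      ((hf z).hasDerivAt).mul h1
    convert h2 using 1
    rw [hh]
    field_simp [h0 z]
    ring
  have hGc : ∀ z, G z = G 0 := by
    intro z
    exact is_const_of_deriv_eq_zero (fun w => (hGd w).differentiableAt) (fun w => (hGd w).deriv) z 0
  have hG0 : G 0 ≠ 0 := mul_ne_zero (h0 0) (Complex.exp_ne_zero _)
  refine ⟨fun z => F z + Complex.log (G 0), hFd.add_const _, fun z => ?_⟩
  have h3 : f z = G 0 * Complex.exp (F z) := by
    have h4 := hGc z
    simp only [hG] at h4
    have h6 : Complex.exp (-F z) * Complex.exp (F z) = 1 := by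
      rw [← Complex.exp_add]; simp
    calc f z = f z * (Complex.exp (-F z) * Complex.exp (F z)) := by rw [h6]; ring
      _ = (f z * Complex.exp (-F z)) * Complex.exp (F z) := by ring
      _ = G 0 * Complex.exp (F z) := by rw [h4]
  rw [Complex.exp_add, Complex.exp_log hG0, h3]; ring

lemma my_disk (f : ℂ → ℂ) (hf : Differentiable ℂ f) (a : ℂ) (ρ : ℝ) (hρ : 0 < ρ)
    (hvar : ∀ z ∈ closedBall a ρ, ‖deriv f z - deriv f a‖ ≤ ‖deriv f a‖ / 2) :
    ball (f a) (ρ * ‖deriv f a‖ / 4) ⊆ Set.range f := by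
  set d := deriv f a with hd
  rcases eq_or_ne d 0 with h0 | h0
  · rw [h0]
    simp [Metric.ball_eq_empty]
  have hdpos : 0 < ‖d‖ := norm_pos_iff.mpr h0
  have hfreq : ∃ᶠ z in nhds a, f z ≠ f a := by
    by_contra hcon
    have hev : ∀ᶠ z in nhds a, f z = f a := by
      simpa using (Filter.not_frequently.mp hcon)
    have : deriv f a = deriv (fun _ : ℂ => f a) a := Filter.EventuallyEq.deriv_eq hev
    rw [deriv_const] at this
    exact h0 (hd ▸ this)
  have hsphere : ∀ z ∈ sphere a ρ, ρ * ‖d‖ / 2 ≤ ‖f z - f a‖ := by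
    intro z hz
    have hzc : z ∈ closedBall a ρ := sphere_subset_closedBall hz
    have hza : ‖z - a‖ = ρ := by
      rw [← dist_eq_norm]; exact hz
    set g : ℂ → ℂ := fun w => f w - d * w with hg
    have hgd : ∀ w ∈ closedBall a ρ, HasDerivWithinAt g (deriv f w - d) (closedBall a ρ) w := by
      intro w _
      have h1 : HasDerivAt (fun w : ℂ => d * w) (d * 1) w := (hasDerivAt_id w).const_mul d
      rw [mul_one] at h1
      exact ((hf w).hasDerivAt.sub h1).hasDerivWithinAt
    have hbound : ‖g z - g a‖ ≤ ‖d‖ / 2 * ‖z - a‖ :=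
      (convex_closedBall a ρ).norm_image_sub_le_of_norm_hasDerivWithin_le hgd
        (fun w hw => hvar w hw) (mem_closedBall_self hρ.le) hzc
    have heq : d * (z - a) = (f z - f a) - (g z - g a) := by rw [hg]; ring
    have h2 : ‖d * (z - a)‖ ≤ ‖f z - f a‖ + ‖g z - g a‖ := by
      rw [heq]; exact norm_sub_le _ _
    have h3 : ‖d * (z - a)‖ = ρ * ‖d‖ := by rw [norm_mul, hza]; ring
    rw [hza] at hbound
    rw [h3] at h2
    linarith
  have himg := DiffContOnCl.ball_subset_image_closedBall
    (hf.diffContOnCl) hρ hsphere hfreq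
  have : ρ * ‖d‖ / 2 / 2 = ρ * ‖d‖ / 4 := by ring
  rw [this] at himg
  exact himg.trans (Set.image_subset_range f _)

lemma my_bloch (g : ℂ → ℂ) (hg : Differentiable ℂ g) (a : ℂ) (ha : deriv g a ≠ 0) (R : ℝ) :
    ∃ c : ℂ, ball c R ⊆ Set.range g := by
  have hg' : Differentiable ℂ (deriv g) := my_deriv_entire g hg
  have hd0 : 0 < ‖deriv g a‖ := norm_pos_iff.mpr ha
  obtain ⟨T, hT⟩ : ∃ T : ℝ, T = ‖a‖ + (256 * |R| + 1) / ‖deriv g a‖ := ⟨_, rfl⟩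
  have hTa : ‖a‖ < T := by
    rw [hT]
    have : 0 < (256 * |R| + 1) / ‖deriv g a‖ := by positivity
    linarith
  have hφc : ContinuousOn (fun z : ℂ => (T - ‖z‖) * ‖deriv g z‖) (closedBall (0:ℂ) T) :=
    ((continuous_const.sub continuous_norm).mul hg'.continuous.norm).continuousOn
  have hane : (closedBall (0:ℂ) T).Nonempty := ⟨a, by simpa using hTa.le⟩
  obtain ⟨b, hbK, hbmax⟩ := (isCompact_closedBall (0:ℂ) T).exists_isMaxOn hane hφc
  have haK : a ∈ closedBall (0:ℂ) T := by simpa using hTa.le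
  obtain ⟨M, hM⟩ : ∃ M : ℝ, M = (T - ‖b‖) * ‖deriv g b‖ := ⟨_, rfl⟩
  have hbmax' : ∀ z ∈ closedBall (0:ℂ) T, (T - ‖z‖) * ‖deriv g z‖ ≤ M := by
    intro z hz
    rw [hM]
    exact hbmax hz
  have hMa : (T - ‖a‖) * ‖deriv g a‖ ≤ M := hbmax' a haK
  have hMlb : 256 * |R| + 1 ≤ M := by
    have he : (T - ‖a‖) * ‖deriv g a‖ = 256 * |R| + 1 := by
      rw [hT]
      field_simp
      ring
    linarith
  have hMpos : 0 < M := by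
    have : (0:ℝ) ≤ |R| := abs_nonneg R
    linarith
  have hbT : ‖b‖ < T := by
    by_contra hcon
    push_neg at hcon
    have h1 : M ≤ 0 := by
      rw [hM]
      have h2 : T - ‖b‖ ≤ 0 := by linarith
      exact mul_nonpos_of_nonpos_of_nonneg h2 (norm_nonneg _)
    linarith
  obtain ⟨s, hs⟩ : ∃ s : ℝ, s = (T - ‖b‖) / 2 := ⟨_, rfl⟩
  have hspos : 0 < s := by rw [hs]; linarith
  have hTb : T - ‖b‖ = 2 * s := by rw [hs]; ring
  have hgb : ‖deriv g b‖ = M / (2 * s) := by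
    rw [hM, hTb, mul_comm, mul_div_assoc, div_self (by positivity : (2:ℝ) * s ≠ 0), mul_one]
  have hgbpos : 0 < ‖deriv g b‖ := by rw [hgb]; positivity
  have claim1 : ∀ z : ℂ, ‖z - b‖ ≤ 3 * s / 2 → ‖deriv g z‖ ≤ 2 * M / s := by
    intro z hz
    have hzn : ‖z‖ ≤ T - s / 2 := by
      calc ‖z‖ ≤ ‖b‖ + ‖z - b‖ := by
            have := norm_add_le b (z - b); simpa using this
        _ ≤ ‖b‖ + 3 * s / 2 := by linarith
        _ = T - s / 2 := by rw [hs]; ring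
    have hzK : z ∈ closedBall (0:ℂ) T := by
      simp only [mem_closedBall, dist_zero_right]
      linarith
    have h1 : (T - ‖z‖) * ‖deriv g z‖ ≤ M := hbmax' z hzK
    have h2 : s / 2 ≤ T - ‖z‖ := by linarith
    have h3 : (s / 2) * ‖deriv g z‖ ≤ M :=
      (mul_le_mul_of_nonneg_right h2 (norm_nonneg _)).trans h1
    rw [div_mul_eq_mul_div] at h3
    rw [le_div_iff₀ hspos, mul_comm]
    linarith
  have claim2 : ∀ z ∈ closedBall b s, ‖deriv (deriv g) z‖ ≤ 4 * M / s ^ 2 := by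
    intro z hz
    have h1 : ∀ w ∈ sphere z (s / 2), ‖deriv g w‖ ≤ 2 * M / s := by
      intro w hw
      apply claim1
      have hwz : ‖w - z‖ = s / 2 := by rw [← dist_eq_norm]; exact hw
      have hzb : ‖z - b‖ ≤ s := by rw [← dist_eq_norm]; exact hz
      calc ‖w - b‖ ≤ ‖w - z‖ + ‖z - b‖ := by
            have := norm_add_le (w - z) (z - b); simpa using this
        _ ≤ s / 2 + s := by rw [hwz]; linarith
        _ = 3 * s / 2 := by ring
    have h4 := Complex.norm_deriv_le_of_forall_mem_sphere_norm_le
      (by positivity : (0:ℝ) < s / 2) (hg'.diffContOnCl) h1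
    calc ‖deriv (deriv g) z‖ ≤ (2 * M / s) / (s / 2) := h4
      _ = 4 * M / s ^ 2 := by field_simp; ring
  obtain ⟨t, ht⟩ : ∃ t : ℝ, t = s / 32 := ⟨_, rfl⟩
  have htpos : 0 < t := by rw [ht]; positivity
  have claim3 : ∀ z ∈ closedBall b t, ‖deriv g z - deriv g b‖ ≤ ‖deriv g b‖ / 2 := by
    intro z hz
    have hsub : closedBall b t ⊆ closedBall b s := by
      apply closedBall_subset_closedBall
      rw [ht]; linarith
    have hderiv : ∀ w ∈ closedBall b t, HasDerivWithinAt (deriv g) (deriv (deriv g) w)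
        (closedBall b t) w := fun w _ => (hg' w).hasDerivAt.hasDerivWithinAt
    have hb2 : ∀ w ∈ closedBall b t, ‖deriv (deriv g) w‖ ≤ 4 * M / s ^ 2 :=
      fun w hw => claim2 w (hsub hw)
    have hest := (convex_closedBall b t).norm_image_sub_le_of_norm_hasDerivWithin_le hderiv hb2
      (mem_closedBall_self htpos.le) hz
    have hzb : ‖z - b‖ ≤ t := by rw [← dist_eq_norm]; exact hz
    calc ‖deriv g z - deriv g b‖ ≤ 4 * M / s ^ 2 * ‖z - b‖ := hest
      _ ≤ 4 * M / s ^ 2 * t := by gcongr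
      _ = M / (8 * s) := by rw [ht]; field_simp; ring
      _ ≤ ‖deriv g b‖ / 2 := by
          rw [hgb, div_div, div_le_div_iff₀ (by positivity) (by positivity)]
          nlinarith [mul_nonneg hMpos.le hspos.le]
  have hdisk := my_disk g hg b t htpos claim3
  refine ⟨g b, subset_trans ?_ hdisk⟩
  apply ball_subset_ball
  have he2 : t * ‖deriv g b‖ / 4 = M / 256 := by
    rw [hgb, ht]
    field_simp
    ring
  rw [he2]
  calc R ≤ |R| := le_abs_self R
    _ ≤ M / 256 := by linarith

lemma my_real_cos_int (k : ℤ) : Real.cos (k * Real.pi) = (-1) ^ k := by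
  have := Real.cos_int_mul_pi_sub 0 k
  simpa using this

lemma my_grid (c : ℂ) : ∃ w : ℂ, dist w c < 4 ∧ ∃ m : ℤ, Complex.cosh (2 * w) = 2 * m - 1 := by
  obtain ⟨u, hu⟩ : ∃ u : ℝ, u = c.re := ⟨_, rfl⟩
  obtain ⟨v, hv⟩ : ∃ v : ℝ, v = c.im := ⟨_, rfl⟩
  obtain ⟨K, hK⟩ : ∃ K : ℝ, K = Real.exp (2 * |u|) := ⟨_, rfl⟩
  have hK1 : 1 ≤ K := by rw [hK]; exact Real.one_le_exp (by positivity)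
  obtain ⟨k, hk⟩ : ∃ k : ℕ, k = Nat.ceil K := ⟨_, rfl⟩
  have hKk : K ≤ k := by rw [hk]; exact Nat.le_ceil K
  have hkK : (k : ℝ) < K + 1 := by rw [hk]; exact Nat.ceil_lt_add_one (by linarith)
  obtain ⟨N, hN⟩ : ∃ N : ℝ, N = ((2 * k + 1 : ℕ) : ℝ) := ⟨_, rfl⟩
  have hNval : N = 2 * (k : ℝ) + 1 := by rw [hN]; push_cast; ring
  have hN1 : 1 ≤ N := by rw [hNval]; have : (0:ℝ) ≤ (k:ℝ) := Nat.cast_nonneg k; linarith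
  have hNK : K ≤ N := by rw [hNval]; linarith
  have hNK2 : N ≤ 2 * K + 3 := by rw [hNval]; linarith
  obtain ⟨S, hS⟩ : ∃ S : ℝ, S = Real.sqrt (N ^ 2 - 1) := ⟨_, rfl⟩
  have hS0 : 0 ≤ S := by rw [hS]; exact Real.sqrt_nonneg _
  have hSsq : S ^ 2 = N ^ 2 - 1 := by
    rw [hS, Real.sq_sqrt (by nlinarith : (0:ℝ) ≤ N ^ 2 - 1)]
  have hSN : S ≤ N := by nlinarith
  obtain ⟨y, hy⟩ : ∃ y : ℝ, y = N + S := ⟨_, rfl⟩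
  have hy1 : N ≤ y := by rw [hy]; linarith
  have hypos : 0 < y := by linarith
  have hyinv : y * (N - S) = 1 := by rw [hy]; nlinarith
  have hyinv' : y⁻¹ = N - S := by
    field_simp
    linarith [hyinv]
  obtain ⟨x, hx⟩ : ∃ x : ℝ, x = Real.log y / 2 := ⟨_, rfl⟩
  -- cosh (2x) = N
  have hcosh2x : Real.cosh (2 * x) = N := by
    have : (2 : ℝ) * x = Real.log y := by rw [hx]; ring
    rw [this, Real.cosh_log hypos, hyinv']
    rw [hy]; ring
  -- x close to |u|
  have hxl : |u| ≤ x := by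
    have h1 : Real.log K ≤ Real.log y := Real.log_le_log (by linarith) (by linarith)
    rw [hK, Real.log_exp] at h1
    rw [hx]; linarith
  have hexp4 : (10 : ℝ) ≤ Real.exp 4 := by
    have h1 : Real.exp 4 = Real.exp 1 ^ 4 := by
      rw [← Real.exp_nat_mul]; norm_num
    have h2 : (2.7 : ℝ) ^ 4 ≤ Real.exp 1 ^ 4 := by
      apply pow_le_pow_left₀ (by norm_num)
      linarith [Real.exp_one_gt_d9]
    rw [h1]
    nlinarith
  have hxr : x ≤ |u| + 2 := by
    have hyle : y ≤ K * Real.exp 4 := by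
      have : y ≤ 2 * N := by rw [hy]; linarith
      have h2 : y ≤ 4 * K + 6 := by linarith
      nlinarith
    have h3 : Real.log y ≤ Real.log (K * Real.exp 4) := Real.log_le_log hypos hyle
    rw [Real.log_mul (by linarith) (Real.exp_ne_zero 4), hK, Real.log_exp, Real.log_exp] at h3
    rw [hx]; linarith
  obtain ⟨x', hx'⟩ : ∃ x' : ℝ, x' = if 0 ≤ u then x else -x := ⟨_, rfl⟩
  have hx'u : |x' - u| ≤ 2 := by
    rw [hx']
    rcases le_or_gt 0 u with h | h
    · rw [if_pos h]
      rw [_root_.abs_of_nonneg h] at hxl hxr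
      rw [abs_le]; constructor <;> linarith
    · rw [if_neg (not_le.mpr h)]
      rw [_root_.abs_of_neg h] at hxl hxr
      rw [abs_le]; constructor <;> linarith
  have hcosh2x' : Real.cosh (2 * x') = N := by
    rw [hx']
    rcases le_or_gt 0 u with h | h
    · rw [if_pos h]; exact hcosh2x
    · rw [if_neg (not_le.mpr h)]
      rw [show (2:ℝ) * -x = -(2*x) by ring, Real.cosh_neg]
      exact hcosh2x
  -- imaginary part
  obtain ⟨j, hj⟩ : ∃ j : ℤ, j = round (2 * v / Real.pi) := ⟨_, rfl⟩
  obtain ⟨v', hv'⟩ : ∃ v' : ℝ, v' = Real.pi * j / 2 := ⟨_, rfl⟩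
  have hv'v : |v' - v| ≤ 1 := by
    have h1 : |2 * v / Real.pi - j| ≤ 1 / 2 := by
      rw [hj]; exact abs_sub_round _
    have hpi : 0 < Real.pi := Real.pi_pos
    have h2 : |v' - v| = Real.pi / 2 * |(j : ℝ) - 2 * v / Real.pi| := by
      rw [hv', ← abs_of_pos (by positivity : (0:ℝ) < Real.pi / 2), ← abs_mul]
      congr 1
      field_simp
    rw [abs_sub_comm] at h1
    calc |v' - v| = Real.pi / 2 * |(j:ℝ) - 2 * v / Real.pi| := h2
      _ ≤ Real.pi / 2 * (1/2) := by gcongr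
      _ ≤ 4 / 2 * (1/2) := by gcongr; exact Real.pi_le_four
      _ ≤ 1 := by norm_num
  refine ⟨(x' : ℂ) + (v' : ℂ) * Complex.I, ?_, ?_⟩
  · have hre : ((x' : ℂ) + (v' : ℂ) * Complex.I - c).re = x' - u := by
      simp [hu]
    have him : ((x' : ℂ) + (v' : ℂ) * Complex.I - c).im = v' - v := by
      simp [hv]
    rw [dist_eq_norm]
    calc ‖(x' : ℂ) + (v' : ℂ) * Complex.I - c‖
        ≤ |((x' : ℂ) + (v' : ℂ) * Complex.I - c).re| + |((x' : ℂ) + (v' : ℂ) * Complex.I - c).im| :=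
          Complex.norm_le_abs_re_add_abs_im _
      _ = |x' - u| + |v' - v| := by rw [hre, him]
      _ ≤ 2 + 1 := add_le_add hx'u hv'v
      _ < 4 := by norm_num
  · -- cosh (2 w) = ± N
    have hsplit : (2 : ℂ) * ((x' : ℂ) + (v' : ℂ) * Complex.I)
        = ((2 * x' : ℝ) : ℂ) + ((j : ℝ) * Real.pi : ℝ) * Complex.I := by
      rw [hv']
      push_cast
      ring
    rw [hsplit, Complex.cosh_add, Complex.cosh_mul_I, Complex.sinh_mul_I]
    have hsin : Complex.sin (((j : ℝ) * Real.pi : ℝ) : ℂ) = 0 := by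
      rw [← Complex.ofReal_sin]
      norm_cast
      exact Real.sin_int_mul_pi j
    have hcos : Complex.cos (((j : ℝ) * Real.pi : ℝ) : ℂ) = ((-1 : ℝ) ^ j : ℝ) := by
      rw [← Complex.ofReal_cos]
      norm_cast
      exact_mod_cast my_real_cos_int j
    have hcoshval : Complex.cosh (((2 * x' : ℝ)) : ℂ) = (N : ℂ) := by
      rw [← Complex.ofReal_cosh, hcosh2x']
    rw [hsin, hcos, hcoshval]
    rcases Int.even_or_odd j with hev | hod
    · refine ⟨(k : ℤ) + 1, ?_⟩
      rw [show ((-1:ℝ)^j) = 1 by rw [hev.neg_zpow, one_zpow]]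
      push_cast
      rw [hNval]
      push_cast
      ring
    · refine ⟨-(k : ℤ), ?_⟩
      rw [hod.neg_one_zpow]
      push_cast
      rw [hNval]
      push_cast
      ring

lemma my_picard (g : ℂ → ℂ) (hg : Differentiable ℂ g) (A B : ℂ) (hAB : A ≠ B)
    (hA : ∀ z, g z ≠ A) (hB : ∀ z, g z ≠ B) : ∀ z w, g z = g w := by
  have hBA : B - A ≠ 0 := sub_ne_zero.mpr (Ne.symm hAB)
  set h : ℂ → ℂ := fun z => (g z - A) / (B - A) with hh
  have hhd : Differentiable ℂ h := (hg.sub_const A).div_const _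
  have hh0 : ∀ z, h z ≠ 0 := by
    intro z hz
    rw [hh] at hz
    simp only [div_eq_zero_iff] at hz
    rcases hz with hz | hz
    · exact hA z (sub_eq_zero.mp hz)
    · exact hBA hz
  have hh1 : ∀ z, h z ≠ 1 := by
    intro z hz
    rw [hh] at hz
    simp only at hz
    rw [div_eq_one_iff_eq hBA] at hz
    exact hB z (sub_left_inj.mp hz)
  obtain ⟨L, hLd, hL⟩ := my_exists_log h hhd hh0
  set F : ℂ → ℂ := fun z => L z / (2 * Real.pi * Complex.I) with hF
  have hFd : Differentiable ℂ F := hLd.div_const _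
  have hFint : ∀ (z : ℂ) (m : ℤ), F z ≠ (m : ℂ) := by
    intro z m hzm
    have hpi : (2 * (Real.pi : ℂ) * Complex.I) ≠ 0 := by
      simp [Real.pi_ne_zero, Complex.I_ne_zero]
    have hLz : L z = (m : ℂ) * (2 * Real.pi * Complex.I) := by
      rw [hF] at hzm
      field_simp at hzm
      linear_combination hzm
    have : Complex.exp (L z) = 1 := by
      rw [hLz]
      exact Complex.exp_int_mul_two_pi_mul_I m
    rw [hL z] at this
    exact hh1 z this
  have hF0 : ∀ z, F z ≠ 0 := fun z hz => hFint z 0 (by simpa using hz)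
  have hF1 : ∀ z, F z ≠ 1 := fun z hz => hFint z 1 (by simpa using hz)
  obtain ⟨L1, hL1d, hL1⟩ := my_exists_log F hFd hF0
  obtain ⟨L2, hL2d, hL2⟩ := my_exists_log (fun z => F z - 1) (hFd.sub_const 1)
    (fun z => sub_ne_zero.mpr (hF1 z))
  set a : ℂ → ℂ := fun z => Complex.exp (L1 z / 2) with haa
  set b : ℂ → ℂ := fun z => Complex.exp (L2 z / 2) with hbb
  have had : Differentiable ℂ a := (hL1d.div_const 2).cexp
  have hbd : Differentiable ℂ b := (hL2d.div_const 2).cexp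
  have ha2 : ∀ z, a z ^ 2 = F z := by
    intro z
    rw [haa]
    simp only
    rw [← Complex.exp_nat_mul]
    rw [show (2:ℕ) * (L1 z / 2) = L1 z by push_cast; ring]
    exact hL1 z
  have hb2 : ∀ z, b z ^ 2 = F z - 1 := by
    intro z
    rw [hbb]
    simp only
    rw [← Complex.exp_nat_mul]
    rw [show (2:ℕ) * (L2 z / 2) = L2 z by push_cast; ring]
    exact hL2 z
  have hab1 : ∀ z, (a z - b z) * (a z + b z) = 1 := by
    intro z
    have := ha2 z
    have := hb2 z
    ring_nf
    linear_combination (ha2 z) - (hb2 z)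
  have hab0 : ∀ z, a z - b z ≠ 0 := by
    intro z hz
    have := hab1 z
    rw [hz, zero_mul] at this
    exact zero_ne_one this
  obtain ⟨L3, hL3d, hL3⟩ := my_exists_log (fun z => a z - b z) (had.sub hbd) hab0
  have hcosh : ∀ z, Complex.cosh (2 * L3 z) = 2 * F z - 1 := by
    intro z
    have he1 : Complex.exp (2 * L3 z) = (a z - b z) ^ 2 := by
      rw [show (2:ℂ) * L3 z = L3 z + L3 z by ring, Complex.exp_add, hL3 z]
      ring
    have he2 : Complex.exp (-(2 * L3 z)) = (a z + b z) ^ 2 := by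
      have hmul : (a z - b z) ^ 2 * (a z + b z) ^ 2 = 1 := by
        rw [← mul_pow, hab1 z, one_pow]
      rw [Complex.exp_neg, he1, inv_eq_of_mul_eq_one_right hmul]
    rw [Complex.cosh, he1, he2]
    linear_combination (ha2 z + hb2 z) / 1
  -- L3 has vanishing derivative everywhere
  have hL3deriv : ∀ z, deriv L3 z = 0 := by
    intro z
    by_contra hz
    obtain ⟨c, hc⟩ := my_bloch L3 hL3d z hz 4
    obtain ⟨w, hw4, m, hwm⟩ := my_grid c
    obtain ⟨z', hz'⟩ := hc (Metric.mem_ball.mpr hw4)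
    have : Complex.cosh (2 * L3 z') = 2 * m - 1 := by rw [hz']; exact hwm
    rw [hcosh z'] at this
    apply hFint z' m
    linear_combination this / 2
  have hL3c : ∀ z w, L3 z = L3 w := fun z w =>
    is_const_of_deriv_eq_zero (fun u => (hL3d u)) hL3deriv z w
  intro z w
  have hFzw : F z = F w := by
    have h1 := hcosh z
    have h2 := hcosh w
    rw [hL3c z w] at h1
    rw [h1] at h2
    linear_combination h2 / 2
  have hLzw : L z = L w := by
    have hpi : (2 * (Real.pi : ℂ) * Complex.I) ≠ 0 := by
      simp [Real.pi_ne_zero, Complex.I_ne_zero]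
    have h3 : L z / (2 * Real.pi * Complex.I) = L w / (2 * Real.pi * Complex.I) := hFzw
    have h4 := congrArg (fun t => t * (2 * (Real.pi:ℂ) * Complex.I)) h3
    simp only [div_mul_cancel₀ _ hpi] at h4
    exact h4
  have hhzw : h z = h w := by rw [← hL z, ← hL w, hLzw]
  rw [hh] at hhzw
  simp only at hhzw
  rw [div_eq_div_iff hBA hBA] at hhzw
  have h5 := mul_right_cancel₀ hBA hhzw
  exact sub_left_inj.mp h5

/-- If `f` is a transcendental entire function whose second iterate has no fixed point,
then there is `z₀` with `f (f z₀) = f z₀`; consequently `f z₀` is a fixed point of `f`. -/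
theorem exists_point_whose_image_is_fixed (f : ℂ → ℂ)
    (hf : Differentiable ℂ f)
    (htrans : ¬ ∃ p : Polynomial ℂ, ∀ z : ℂ, f z = p.eval z)
    (hnofix : ∀ z : ℂ, f (f z) ≠ z) :
    ∃ z₀ : ℂ, f (f z₀) = f z₀ := by
  by_contra hcon
  push_neg at hcon
  have hfix : ∀ z, f z ≠ z := fun z hz => hnofix z (by rw [hz, hz])
  have hqd : Differentiable ℂ (fun z => (f (f z) - z) / (f z - z)) :=
    ((hf.comp hf).sub differentiable_id).div
      (hf.sub differentiable_id) (fun z => sub_ne_zero.mpr (hfix z))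
  have hq0 : ∀ z, (f (f z) - z) / (f z - z) ≠ 0 :=
    fun z => div_ne_zero (sub_ne_zero.mpr (hnofix z)) (sub_ne_zero.mpr (hfix z))
  have hq1 : ∀ z, (f (f z) - z) / (f z - z) ≠ 1 := by
    intro z hz
    rw [div_eq_one_iff_eq (sub_ne_zero.mpr (hfix z))] at hz
    exact hcon z (sub_left_inj.mp hz)
  have hqc := my_picard _ hqd 0 1 (by norm_num) hq0 hq1
  obtain ⟨c, hc⟩ : ∃ c : ℂ, c = (f (f 0) - 0) / (f 0 - 0) := ⟨_, rfl⟩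
  have hc0 : c ≠ 0 := hc ▸ hq0 0
  have hc1 : c ≠ 1 := hc ▸ hq1 0
  have hqz : ∀ z, f (f z) - z = c * (f z - z) := by
    intro z
    have h1 : (f (f z) - z) / (f z - z) = c := by rw [hc]; exact hqc z 0
    rw [div_eq_iff (sub_ne_zero.mpr (hfix z))] at h1
    exact h1
  have hder : ∀ z, deriv f (f z) * deriv f z - 1 = c * (deriv f z - 1) := by
    intro z
    have hcomp : HasDerivAt (fun z => f (f z)) (deriv f (f z) * deriv f z) z :=
      ((hf (f z)).hasDerivAt).comp z ((hf z).hasDerivAt)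
    have h1 : HasDerivAt (fun z => f (f z) - z) (deriv f (f z) * deriv f z - 1) z := by
      exact hcomp.sub (hasDerivAt_id z)
    have h2 : HasDerivAt (fun z => c * (f z - z)) (c * (deriv f z - 1)) z := by
      simpa using (((hf z).hasDerivAt.sub (hasDerivAt_id z)).const_mul c)
    have he : (fun z => f (f z) - z) = fun z => c * (f z - z) := funext hqz
    rw [he] at h1
    exact h1.unique h2
  have hf'0 : ∀ w, deriv f w ≠ 0 := by
    intro w hw
    have h1 := hder w
    rw [hw] at h1
    exact hc1 (by linear_combination h1)
  have hrc : ∀ z, deriv f (f z) ≠ c := by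
    intro z hz
    have h1 := hder z
    rw [hz] at h1
    exact hc1 (by linear_combination h1)
  have hrd : Differentiable ℂ (fun z => deriv f (f z)) := (my_deriv_entire f hf).comp hf
  have hr0 : ∀ z, deriv f (f z) ≠ 0 := fun z => hf'0 (f z)
  have hrcon := my_picard _ hrd 0 c (Ne.symm hc0) hr0 hrc
  obtain ⟨d, hd⟩ : ∃ d : ℂ, d = deriv f (f 0) := ⟨_, rfl⟩
  have hrd2 : ∀ z, deriv f (f z) = d := by
    intro z; rw [hd]; exact hrcon z 0
  -- open mapping / identity theorem step
  have hfa : AnalyticOnNhd ℂ f Set.univ := hf.differentiableOn.analyticOnNhd isOpen_univ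
  rcases (hfa 0 (Set.mem_univ 0)).eventually_constant_or_nhds_le_map_nhds with hA | hB
  · -- f eventually constant near 0 ⇒ f constant ⇒ polynomial
    have heq : Set.EqOn f (fun _ => f 0) Set.univ :=
      hfa.eqOn_of_preconnected_of_eventuallyEq (analyticOnNhd_const)
        isPreconnected_univ (Set.mem_univ 0) hA
    exact htrans ⟨Polynomial.C (f 0), fun z => by
      rw [heq (Set.mem_univ z)]; simp⟩
  · -- range f is a neighborhood of f 0
    have hmem : Set.range f ∈ nhds (f 0) := hB (Filter.mem_map.mpr (by simp))
    have hev : deriv f =ᶠ[nhds (f 0)] (fun _ => d) := by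
      filter_upwards [hmem] with w hw
      obtain ⟨z, rfl⟩ := hw
      exact hrd2 z
    have hda : AnalyticOnNhd ℂ (deriv f) Set.univ := hfa.deriv
    have heq : Set.EqOn (deriv f) (fun _ => d) Set.univ :=
      hda.eqOn_of_preconnected_of_eventuallyEq analyticOnNhd_const
        isPreconnected_univ (Set.mem_univ (f 0)) hev
    -- hence f is affine
    have hlin : ∀ z, f z - d * z = f 0 := by
      intro z
      have hgd : ∀ w, HasDerivAt (fun z => f z - d * z) 0 w := by
        intro w
        have h1 : HasDerivAt (fun z : ℂ => d * z) (d * 1) w := (hasDerivAt_id w).const_mul d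
        have h2 := (hf w).hasDerivAt.sub h1
        rw [heq (Set.mem_univ w)] at h2
        have h3 : HasDerivAt (f - fun z => d * z) 0 w := by simpa only [mul_one, sub_self] using h2
        exact h3
      have := is_const_of_deriv_eq_zero (fun w => (hgd w).differentiableAt)
        (fun w => (hgd w).deriv) z 0
      simpa using this
    exact htrans ⟨Polynomial.C d * Polynomial.X + Polynomial.C (f 0), fun z => by
      have := hlin z
      simp only [Polynomial.eval_add, Polynomial.eval_mul, Polynomial.eval_C, Polynomial.eval_X]
      linear_combination this⟩
end
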